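/- Let J and M be finite nonempty index sets and φ_j, φ'_m fPIL formulas over a finite set of ports P for each j ∈ J and m ∈ M. Then (⊎_{j∈J} φ_j) ⊗ (⊎_{m∈M} φ'_m) ≡ ~( (⊎_{j∈J} φ_j) ⊎ (⊎_{m∈M} φ'_m) ) ⊗ ( ⋁f_{(j,m)∈J×M} (φ_j ∧f φ'_m) ) as fPCL formulas. -/

import Mathlib

/-- A De Morgan algebra: a bounded distributive lattice equipped with a
complement map satisfying involution and the De Morgan laws. -/
class DeMorganAlg (K : Type) extends DistribLattice K, BoundedOrder K where
  compl : K → K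
  compl_compl : ∀ k : K, compl (compl k) = k
  compl_sup : ∀ k k' : K, compl (k ⊔ k') = compl k ⊓ compl k'
  compl_inf : ∀ k k' : K, compl (k ⊓ k') = compl k ⊔ compl k'

/-- fPIL formulas over the set of ports `P`. -/
inductive fPIL (P : Type) : Type where
  | tt : fPIL P
  | port : P → fPIL P
  | fnot : fPIL P → fPIL P
  | fdisj : fPIL P → fPIL P → fPIL P

/-- Fuzzy conjunction of fPIL formulas. -/
def fPIL.fconj {P : Type} (φ₁ φ₂ : fPIL P) : fPIL P :=
  .fnot (.fdisj (.fnot φ₁) (.fnot φ₂))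

/-- The fPIL formula `false`. -/
def fPIL.ff {P : Type} : fPIL P := .fnot .tt

/-- K-fuzzy interactions on `P`: maps `a : P → K` with `a p ≠ 0` for some port `p`. -/
def fI (P K : Type) [DeMorganAlg K] : Type := {a : P → K // ∃ p : P, a p ≠ ⊥}

/-- Semantics of fPIL formulas. -/
def fPIL.sem {P K : Type} [DeMorganAlg K] : fPIL P → fI P K → K
  | .tt, _ => ⊤
  | .port p, a => a.1 p
  | .fnot φ, a => DeMorganAlg.compl (φ.sem a)
  | .fdisj φ₁ φ₂, a => φ₁.sem a ⊔ φ₂.sem a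

/-- Equivalence of fPIL formulas: equal semantics over every De Morgan algebra
and every fuzzy interaction. -/
def pilEquiv {P : Type} (φ₁ φ₂ : fPIL P) : Prop :=
  ∀ (K : Type) [DeMorganAlg K] (a : fI P K), φ₁.sem a = φ₂.sem a
noncomputable instance {P K : Type} [DeMorganAlg K] : DecidableEq (fI P K) :=
  Classical.decEq _

/-- fPCL formulas over the set of ports `P`. -/
inductive fPCL (P : Type) : Type where
  | pil : fPIL P → fPCL P
  | cneg : fPCL P → fPCL P
  | oplus : fPCL P → fPCL P → fPCL P
  | coal : fPCL P → fPCL P → fPCL P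

/-- Fuzzy conjunction `⊗` of fPCL formulas. -/
def fPCL.otimes {P : Type} (ζ₁ ζ₂ : fPCL P) : fPCL P :=
  .cneg (.oplus (.cneg ζ₁) (.cneg ζ₂))

/-- The closure operator `~ζ := ζ ⊎ true`. -/
def fPCL.closure {P : Type} (ζ : fPCL P) : fPCL P := .coal ζ (.pil .tt)

/-- Semantics of fPCL formulas on finite sets of fuzzy interactions. -/
noncomputable def fPCL.sem {P K : Type} [DeMorganAlg K] :
    fPCL P → Finset (fI P K) → K
  | .pil φ, γ => γ.inf fun a => φ.sem a
  | .cneg ζ, γ => DeMorganAlg.compl (ζ.sem γ)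
  | .oplus ζ₁ ζ₂, γ => ζ₁.sem γ ⊔ ζ₂.sem γ
  | .coal ζ₁ ζ₂, γ =>
      ((γ.powerset ×ˢ γ.powerset).filter fun q =>
          q.1.Nonempty ∧ q.2.Nonempty ∧ q.1 ∪ q.2 = γ).sup fun q =>
        ζ₁.sem q.1 ⊓ ζ₂.sem q.2

/-- Equivalence of fPCL formulas: equal semantics over every De Morgan algebra
and every nonempty finite set of fuzzy interactions. -/
def pclEquiv {P : Type} (ζ₁ ζ₂ : fPCL P) : Prop :=
  ∀ (K : Type) [DeMorganAlg K] (γ : Finset (fI P K)), γ.Nonempty →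
    ζ₁.sem γ = ζ₂.sem γ
/-- Iterated fuzzy disjunction `⋁f_{j∈Fin (n+1)} φ j` of fPIL formulas over the
finite nonempty index set `Fin (n+1)`. -/
def fPIL.bigDisj {P : Type} : (n : ℕ) → (Fin (n + 1) → fPIL P) → fPIL P
  | 0, φ => φ 0
  | n + 1, φ => .fdisj (fPIL.bigDisj n fun i => φ i.castSucc) (φ (Fin.last (n + 1)))

/-- Iterated fuzzy conjunction `⋀f_{j∈Fin (n+1)} φ j` of fPIL formulas. -/
def fPIL.bigConj {P : Type} : (n : ℕ) → (Fin (n + 1) → fPIL P) → fPIL P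
  | 0, φ => φ 0
  | n + 1, φ => fPIL.fconj (fPIL.bigConj n fun i => φ i.castSucc) (φ (Fin.last (n + 1)))

/-- Iterated coalescing `⊎_{j∈Fin (n+1)} ζ j` of fPCL formulas. -/
def fPCL.bigCoal {P : Type} : (n : ℕ) → (Fin (n + 1) → fPCL P) → fPCL P
  | 0, ζ => ζ 0
  | n + 1, ζ => .coal (fPCL.bigCoal n fun i => ζ i.castSucc) (ζ (Fin.last (n + 1)))

/-- Iterated fuzzy conjunction `⊗_{j∈Fin (n+1)} ζ j` of fPCL formulas. -/
def fPCL.bigOtimes {P : Type} : (n : ℕ) → (Fin (n + 1) → fPCL P) → fPCL P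
  | 0, ζ => ζ 0
  | n + 1, ζ => (fPCL.bigOtimes n fun i => ζ i.castSucc).otimes (ζ (Fin.last (n + 1)))

/-- Iterated fuzzy disjunction `⊕_{j∈Fin (n+1)} ζ j` of fPCL formulas. -/
def fPCL.bigOplus {P : Type} : (n : ℕ) → (Fin (n + 1) → fPCL P) → fPCL P
  | 0, ζ => ζ 0
  | n + 1, ζ => .oplus (fPCL.bigOplus n fun i => ζ i.castSucc) (ζ (Fin.last (n + 1)))

/-! Write `A`, `B` for the two coalescings and `Â`, `B̂` for the fPIL disjunctions `⋁f φ_j`,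
`⋁f φ'_m`. On every set of interactions `A ≤ Â` and `B ≤ B̂`, and by distributivity the
disjunction of the `φ_j ∧f φ'_m` is `Â ∧ B̂`; this gives one inequality. For the other, `A` is
extensible: `A(δ) ∧ Â(σ) ≤ A(δ ∪ σ)`, since an interaction satisfying some `φ_j` may be added
to the `φ_j`-block of any decomposition of `δ`. Every term of `~(A ⊎ B)(γ)` contains some
`A(δ)` with `δ ⊆ γ`, which `Â(γ)` extends to `A(γ)`; symmetrically for `B`. -/

section Semantics

variable {P K : Type} [DeMorganAlg K]

namespace fPIL

lemma sem_fconj (φ₁ φ₂ : fPIL P) (a : fI P K) :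
    (fconj φ₁ φ₂).sem a = φ₁.sem a ⊓ φ₂.sem a := by
  simp only [fconj, sem, DeMorganAlg.compl_sup, DeMorganAlg.compl_compl]

lemma sem_bigDisj_fconj_left (ψ : fPIL P) (a : fI P K) :
    ∀ (n : ℕ) (φ : Fin (n + 1) → fPIL P),
      (bigDisj n fun k => fconj ψ (φ k)).sem a = ψ.sem a ⊓ (bigDisj n φ).sem a
  | 0, φ => sem_fconj ψ (φ 0) a
  | n + 1, φ => by
    simp only [bigDisj, sem, sem_bigDisj_fconj_left ψ a n, sem_fconj, inf_sup_left]

lemma sem_bigDisj_bigDisj_fconj (a : fI P K) {n : ℕ} (φ' : Fin (n + 1) → fPIL P) :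
    ∀ (m : ℕ) (φ : Fin (m + 1) → fPIL P),
      (bigDisj m fun j => bigDisj n fun k => fconj (φ j) (φ' k)).sem a =
        (bigDisj m φ).sem a ⊓ (bigDisj n φ').sem a
  | 0, φ => sem_bigDisj_fconj_left (φ 0) a n φ'
  | m + 1, φ => by
    simp only [bigDisj, sem, sem_bigDisj_bigDisj_fconj a φ' m, sem_bigDisj_fconj_left,
      inf_sup_right]

end fPIL

namespace fPCL

noncomputable def splits (γ : Finset (fI P K)) : Finset (Finset (fI P K) × Finset (fI P K)) :=
  (γ.powerset ×ˢ γ.powerset).filter fun q => q.1.Nonempty ∧ q.2.Nonempty ∧ q.1 ∪ q.2 = γ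

lemma mem_splits {γ : Finset (fI P K)} {q : Finset (fI P K) × Finset (fI P K)} :
    q ∈ splits γ ↔ q.1.Nonempty ∧ q.2.Nonempty ∧ q.1 ∪ q.2 = γ := by
  refine Finset.mem_filter.trans ⟨And.right, fun h => ⟨?_, h⟩⟩
  obtain ⟨-, -, hu⟩ := h
  simp only [Finset.mem_product, Finset.mem_powerset, ← hu]
  exact ⟨Finset.subset_union_left, Finset.subset_union_right⟩

lemma sem_coal (ζ₁ ζ₂ : fPCL P) (γ : Finset (fI P K)) :
    (coal ζ₁ ζ₂).sem γ = (splits γ).sup fun q => ζ₁.sem q.1 ⊓ ζ₂.sem q.2 :=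
  rfl

lemma sem_otimes (ζ₁ ζ₂ : fPCL P) (γ : Finset (fI P K)) :
    (otimes ζ₁ ζ₂).sem γ = ζ₁.sem γ ⊓ ζ₂.sem γ := by
  simp only [otimes, sem, DeMorganAlg.compl_sup, DeMorganAlg.compl_compl]

lemma sem_pil_insert (φ : fPIL P) (a : fI P K) (δ : Finset (fI P K)) :
    (pil φ).sem (insert a δ) = φ.sem a ⊓ (pil φ).sem δ :=
  Finset.inf_insert

lemma sem_pil_tt (γ : Finset (fI P K)) : (pil .tt : fPCL P).sem γ = ⊤ :=
  Finset.inf_top γ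

lemma le_sem_coal {ζ₁ ζ₂ : fPCL P} {γ₁ γ₂ : Finset (fI P K)} (h₁ : γ₁.Nonempty)
    (h₂ : γ₂.Nonempty) : ζ₁.sem γ₁ ⊓ ζ₂.sem γ₂ ≤ (coal ζ₁ ζ₂).sem (γ₁ ∪ γ₂) := by
  rw [sem_coal]
  exact Finset.le_sup (f := fun q => ζ₁.sem q.1 ⊓ ζ₂.sem q.2) (b := (γ₁, γ₂))
    (mem_splits.2 ⟨h₁, h₂, rfl⟩)

lemma inf_le_sem_coal_of_nonempty {ζ₁ ζ₂ : fPCL P} {γ : Finset (fI P K)} (hγ : γ.Nonempty) :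
    ζ₁.sem γ ⊓ ζ₂.sem γ ≤ (coal ζ₁ ζ₂).sem γ := by
  simpa only [Finset.union_self] using le_sem_coal (ζ₁ := ζ₁) (ζ₂ := ζ₂) hγ hγ

lemma sem_coal_inf_le {ζ₁ ζ₂ : fPCL P} {γ : Finset (fI P K)} {x y : K}
    (h : ∀ γ₁ γ₂, γ₁.Nonempty → γ₂.Nonempty → γ₁ ∪ γ₂ = γ → ζ₁.sem γ₁ ⊓ ζ₂.sem γ₂ ⊓ x ≤ y) :
    (coal ζ₁ ζ₂).sem γ ⊓ x ≤ y := by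
  rw [sem_coal, Finset.sup_inf_distrib_right]
  exact Finset.sup_le fun q hq => h q.1 q.2 (mem_splits.1 hq).1 (mem_splits.1 hq).2.1
    (mem_splits.1 hq).2.2

lemma le_sem_closure {ζ : fPCL P} {γ : Finset (fI P K)} (hγ : γ.Nonempty) :
    ζ.sem γ ≤ ζ.closure.sem γ := by
  simpa only [closure, sem_pil_tt, inf_top_eq] using
    inf_le_sem_coal_of_nonempty (ζ₁ := ζ) (ζ₂ := pil .tt) hγ

lemma sem_closure_coal_inf_le_left {ζ ξ : fPCL P} {γ : Finset (fI P K)} {x : K}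
    (hext : ∀ δ ⊆ γ, ζ.sem δ ⊓ x ≤ ζ.sem γ) :
    (closure (coal ζ ξ)).sem γ ⊓ x ≤ ζ.sem γ := by
  refine sem_coal_inf_le fun δ _ _ _ hδ => (inf_le_inf_right x inf_le_left).trans ?_
  refine sem_coal_inf_le fun δ₁ δ₂ _ _ hδ' => (inf_le_inf_right x inf_le_left).trans ?_
  have hδ₁ : δ₁ ⊆ γ := by
    rw [← hδ, ← hδ']
    exact Finset.subset_union_left.trans Finset.subset_union_left
  exact hext δ₁ hδ₁

lemma sem_closure_coal_inf_le_right {ζ ξ : fPCL P} {γ : Finset (fI P K)} {x : K}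
    (hext : ∀ δ ⊆ γ, ζ.sem δ ⊓ x ≤ ζ.sem γ) :
    (closure (coal ξ ζ)).sem γ ⊓ x ≤ ζ.sem γ := by
  refine sem_coal_inf_le fun δ _ _ _ hδ => (inf_le_inf_right x inf_le_left).trans ?_
  refine sem_coal_inf_le fun δ₁ δ₂ _ _ hδ' => (inf_le_inf_right x inf_le_right).trans ?_
  have hδ₂ : δ₂ ⊆ γ := by
    rw [← hδ, ← hδ']
    exact Finset.subset_union_right.trans Finset.subset_union_left
  exact hext δ₂ hδ₂

lemma sem_bigCoal_pil_le :
    ∀ (m : ℕ) (φ : Fin (m + 1) → fPIL P) (δ : Finset (fI P K)),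
      (bigCoal m fun j => pil (φ j)).sem δ ≤ (pil (fPIL.bigDisj m φ)).sem δ
  | 0, _, _ => le_rfl
  | m + 1, φ, δ => by
    rw [bigCoal, sem_coal]
    refine Finset.sup_le fun q hq => ?_
    obtain ⟨-, -, rfl⟩ := mem_splits.1 hq
    refine Finset.le_inf fun a ha => ?_
    rcases Finset.mem_union.1 ha with ha | ha
    · refine inf_le_left.trans ((sem_bigCoal_pil_le m _ q.1).trans ?_)
      exact (Finset.inf_le ha).trans le_sup_left
    · exact inf_le_right.trans ((Finset.inf_le ha).trans le_sup_right)

lemma sem_bigCoal_pil_inf_le_insert (a : fI P K) :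
    ∀ (m : ℕ) (φ : Fin (m + 1) → fPIL P) (δ : Finset (fI P K)),
      (bigCoal m fun j => pil (φ j)).sem δ ⊓ (fPIL.bigDisj m φ).sem a ≤
        (bigCoal m fun j => pil (φ j)).sem (insert a δ)
  | 0, φ, δ => ((sem_pil_insert (φ 0) a δ).trans (inf_comm _ _)).ge
  | m + 1, φ, δ => by
    refine sem_coal_inf_le fun δ₁ δ₂ h₁ h₂ hδ => ?_
    rw [fPIL.bigDisj, fPIL.sem, inf_sup_left]
    refine sup_le ?_ ?_
    · have hins : insert a δ = insert a δ₁ ∪ δ₂ := by rw [← hδ, Finset.insert_union]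
      rw [hins, inf_right_comm]
      exact (inf_le_inf_right _ (sem_bigCoal_pil_inf_le_insert a m _ δ₁)).trans
        (le_sem_coal (Finset.insert_nonempty a δ₁) h₂)
    · have hins : insert a δ = δ₁ ∪ insert a δ₂ := by rw [← hδ, Finset.union_insert]
      rw [hins, inf_assoc]
      have hlast := (sem_pil_insert (φ (Fin.last (m + 1))) a δ₂).trans (inf_comm _ _)
      exact (inf_le_inf_left _ hlast.ge).trans (le_sem_coal h₁ (Finset.insert_nonempty a δ₂))

lemma sem_bigCoal_pil_inf_le_union (m : ℕ) (φ : Fin (m + 1) → fPIL P)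
    (δ σ : Finset (fI P K)) :
    (bigCoal m fun j => pil (φ j)).sem δ ⊓ (pil (fPIL.bigDisj m φ)).sem σ ≤
      (bigCoal m fun j => pil (φ j)).sem (δ ∪ σ) := by
  induction σ using Finset.induction_on with
  | empty => simp only [sem, Finset.inf_empty, inf_top_eq, Finset.union_empty, le_rfl]
  | insert a σ _ ih =>
    rw [sem_pil_insert, inf_left_comm, inf_comm, Finset.union_insert]
    exact (inf_le_inf_right _ ih).trans (sem_bigCoal_pil_inf_le_insert a m φ (δ ∪ σ))

lemma sem_bigCoal_pil_inf_le_of_subset (m : ℕ) (φ : Fin (m + 1) → fPIL P)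
    {δ γ : Finset (fI P K)} (hδ : δ ⊆ γ) :
    (bigCoal m fun j => pil (φ j)).sem δ ⊓ (pil (fPIL.bigDisj m φ)).sem γ ≤
      (bigCoal m fun j => pil (φ j)).sem γ := by
  simpa only [Finset.union_eq_right.2 hδ] using sem_bigCoal_pil_inf_le_union m φ δ γ

end fPCL

end Semantics

theorem fpcl_bigCoal_otimes_general {P : Type} (m n : ℕ)
    (φ : Fin (m + 1) → fPIL P) (φ' : Fin (n + 1) → fPIL P) :
    pclEquiv
      ((fPCL.bigCoal m fun j => .pil (φ j)).otimes
        (fPCL.bigCoal n fun k => .pil (φ' k)))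
      ((fPCL.closure (.coal (fPCL.bigCoal m fun j => .pil (φ j))
          (fPCL.bigCoal n fun k => .pil (φ' k)))).otimes
        (.pil (fPIL.bigDisj m fun j =>
          fPIL.bigDisj n fun k => fPIL.fconj (φ j) (φ' k)))) := by
  intro K _ γ hγ
  have hdisj : (fPCL.pil (fPIL.bigDisj m fun j => fPIL.bigDisj n fun k =>
      (φ j).fconj (φ' k))).sem γ =
        (fPCL.pil (fPIL.bigDisj m φ)).sem γ ⊓ (fPCL.pil (fPIL.bigDisj n φ')).sem γ := by
    simp only [fPCL.sem, fPIL.sem_bigDisj_bigDisj_fconj]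
    exact Finset.inf_inf
  rw [fPCL.sem_otimes, fPCL.sem_otimes, hdisj]
  apply le_antisymm
  · refine le_inf ?_ (inf_le_inf (fPCL.sem_bigCoal_pil_le m φ γ)
      (fPCL.sem_bigCoal_pil_le n φ' γ))
    exact (fPCL.inf_le_sem_coal_of_nonempty hγ).trans (fPCL.le_sem_closure hγ)
  · refine le_inf ((inf_le_inf_left _ inf_le_left).trans ?_)
      ((inf_le_inf_left _ inf_le_right).trans ?_)
    · exact fPCL.sem_closure_coal_inf_le_left fun _ => fPCL.sem_bigCoal_pil_inf_le_of_subset m φ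
    · exact fPCL.sem_closure_coal_inf_le_right fun _ => fPCL.sem_bigCoal_pil_inf_le_of_subset n φ'

/-- for finite nonempty index sets `J = Fin (m+1)`, `M = Fin (n+1)`
and fPIL formulas `φ j`, `φ' k`,
`(⊎_{j∈J} φ_j) ⊗ (⊎_{m∈M} φ'_m) ≡
   ~((⊎_{j∈J} φ_j) ⊎ (⊎_{m∈M} φ'_m)) ⊗ (⋁f_{(j,m)∈J×M} (φ_j ∧f φ'_m))`
as fPCL formulas (the iterated disjunction over `J×M` being taken by iterating
over `J` and then over `M`). -/
theorem fpcl_bigCoal_otimes {P : Type} [Fintype P] (m n : ℕ)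
    (φ : Fin (m + 1) → fPIL P) (φ' : Fin (n + 1) → fPIL P) :
    pclEquiv
      ((fPCL.bigCoal m fun j => .pil (φ j)).otimes
        (fPCL.bigCoal n fun k => .pil (φ' k)))
      ((fPCL.closure (.coal (fPCL.bigCoal m fun j => .pil (φ j))
          (fPCL.bigCoal n fun k => .pil (φ' k)))).otimes
        (.pil (fPIL.bigDisj m fun j =>
          fPIL.bigDisj n fun k => fPIL.fconj (φ j) (φ' k)))) :=
  fpcl_bigCoal_otimes_general m n φ φ'
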